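/- arXiv:2102.07626 — 2 statements merged into one kernel-verified Lean document; each statement's English description precedes it below -/
import Mathlib

section
/- Let f : {0,1}³ → {0,1} be an elementary cellular automaton local rule with f(0,0,0) = 0, and set c₇ = f(1,1,1), S₂ = f(1,1,0)+f(1,0,1)+f(0,1,1), S₁ = f(1,0,0)+f(0,1,0)+f(0,0,1). If c₇ − S₂ + S₁ = 0 and S₂ ≥ 2S₁, then for every λ ∈ (0,1) the mean-field fixed-point equation a = λ·Σ_{(z₁,z₂,z₃)∈{0,1}³ : f(z₁,z₂,z₃)=1} Π_{k=1}^{3} (z_k·a + (1−z_k)·(1−a)) has a = 0 as its unique solution in [0,1]. -/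
/-- Real value of a binary cell. -/
def bitR (b : Bool) : ℝ := (b.toNat : ℝ)

/-- The mean-field sum `Σ_{f(z)=1} Π_{k=1}^{3} (z_k·a + (1-z_k)·(1-a))`. -/
noncomputable def mfSum (f : Bool → Bool → Bool → Bool) (a : ℝ) : ℝ :=
  ∑ z : Bool × Bool × Bool,
    if f z.1 z.2.1 z.2.2 = true then
      (bitR z.1 * a + (1 - bitR z.1) * (1 - a)) *
        ((bitR z.2.1 * a + (1 - bitR z.2.1) * (1 - a)) *
          (bitR z.2.2 * a + (1 - bitR z.2.2) * (1 - a)))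
    else 0

/-- `c₇ = f(1,1,1)`. -/
def digit7 (f : Bool → Bool → Bool → Bool) : ℕ := (f true true true).toNat

/-- `S₂ = f(1,1,0)+f(1,0,1)+f(0,1,1)`. -/
def sum2 (f : Bool → Bool → Bool → Bool) : ℕ :=
  (f true true false).toNat + (f true false true).toNat + (f false true true).toNat

/-- `S₁ = f(1,0,0)+f(0,1,0)+f(0,0,1)`. -/
def sum1 (f : Bool → Bool → Bool → Bool) : ℕ :=
  (f true false false).toNat + (f false true false).toNat + (f false false true).toNat

/-!
With `f(0,0,0) = 0` and `c₇ = S₂ - S₁`, the mean-field polynomial factors as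
`a · (S₁ + (S₂ - 2S₁)·a)`. Under `S₂ ≥ 2S₁` the linear factor is increasing, so on `[0,1]` it is
at most its value `S₂ - S₁ = c₇ ≤ 1` at `a = 1`. Hence the right-hand side `λ·a·(…)` stays strictly
below `a` for `a ∈ (0,1]`, leaving `a = 0` as the only fixed point.
-/

lemma ite_eq_toNat_mul (b : Bool) (x : ℝ) :
    (if b = true then x else 0) = (b.toNat : ℝ) * x := by
  cases b <;> simp

lemma mfSum_eq_cubic (f : Bool → Bool → Bool → Bool) (a : ℝ) :
    mfSum f a = ((f false false false).toNat : ℝ) * (1 - a) ^ 3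
      + sum1 f * (a * (1 - a) ^ 2) + sum2 f * (a ^ 2 * (1 - a)) + digit7 f * a ^ 3 := by
  simp only [mfSum, Fintype.sum_prod_type, Fintype.sum_bool, ite_eq_toNat_mul, bitR,
    Bool.toNat_true, Bool.toNat_false, sum1, sum2, digit7]
  push_cast
  ring

lemma mfSum_eq_mul_linear {f : Bool → Bool → Bool → Bool} (hf : f false false false = false)
    (hc : (digit7 f : ℝ) = sum2 f - sum1 f) (a : ℝ) :
    mfSum f a = a * (sum1 f + (sum2 f - 2 * sum1 f) * a) := by
  rw [mfSum_eq_cubic, hf, hc]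
  simp only [Bool.toNat_false, Nat.cast_zero, zero_mul, zero_add]
  ring

lemma mfSum_le_self {f : Bool → Bool → Bool → Bool} (hf : f false false false = false)
    (hc : (digit7 f : ℝ) = sum2 f - sum1 f) (hS : 2 * (sum1 f : ℝ) ≤ sum2 f)
    {a : ℝ} (ha : a ∈ Set.Icc (0 : ℝ) 1) : mfSum f a ≤ a := by
  obtain ⟨ha0, ha1⟩ := ha
  have hslope : (sum2 f - 2 * sum1 f) * a ≤ sum2 f - 2 * sum1 f :=
    mul_le_of_le_one_right (by linarith) ha1
  have hc7 : (digit7 f : ℝ) ≤ 1 := by exact_mod_cast Bool.toNat_le _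
  rw [mfSum_eq_mul_linear hf hc]
  exact mul_le_of_le_one_right ha0 (by linarith)

lemma setOf_eq_mul_eq_zero {g : ℝ → ℝ} (hg0 : g 0 = 0)
    (hg : ∀ a ∈ Set.Icc (0 : ℝ) 1, g a ≤ a) {l : ℝ} (hl : l ∈ Set.Ioo (0 : ℝ) 1) :
    {a : ℝ | a ∈ Set.Icc (0 : ℝ) 1 ∧ a = l * g a} = {0} := by
  ext a
  simp only [Set.mem_ofPred_eq, Set.mem_singleton_iff]
  constructor
  · rintro ⟨ha, hfix⟩
    by_contra hne
    have hpos : 0 < a := lt_of_le_of_ne ha.1 (Ne.symm hne)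
    have : l * g a < a :=
      calc l * g a ≤ l * a := mul_le_mul_of_nonneg_left (hg a ha) hl.1.le
        _ < a := mul_lt_of_lt_one_left hpos hl.2
    exact this.ne hfix.symm
  · rintro rfl
    simp [hg0]

theorem stmt10 (f : Bool → Bool → Bool → Bool) (hf : f false false false = false)
    (hc : (digit7 f : ℤ) - (sum2 f : ℤ) + (sum1 f : ℤ) = 0)
    (hS : sum2 f ≥ 2 * sum1 f) :
    ∀ l ∈ Set.Ioo (0:ℝ) 1,
      {a : ℝ | a ∈ Set.Icc (0:ℝ) 1 ∧ a = l * mfSum f a} = {0} := by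
  have hc' : (digit7 f : ℝ) = sum2 f - sum1 f := by
    have : ((digit7 f : ℤ) : ℝ) - (sum2 f : ℤ) + (sum1 f : ℤ) = 0 := by exact_mod_cast hc
    push_cast at this
    linarith
  have hS' : 2 * (sum1 f : ℝ) ≤ sum2 f := by exact_mod_cast hS
  intro l hl
  refine setOf_eq_mul_eq_zero ?_ (fun a ha => mfSum_le_self hf hc' hS' ha) hl
  simp [mfSum_eq_mul_linear hf hc']
end

section
/- Let f : {0,1}³ → {0,1} be an elementary cellular automaton local rule with f(0,0,0) = 0, let λ ∈ (0,1), and set S₁ = f(1,0,0)+f(0,1,0)+f(0,0,1). If λ·S₁ > 1, then there exists a ∈ (0,1) solving the mean-field fixed-point equation a = λ·Σ_{(z₁,z₂,z₃)∈{0,1}³ : f(z₁,z₂,z₃)=1} Π_{k=1}^{3} (z_k·a + (1−z_k)·(1−a)). -/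
open Set

section MeanField

variable (f : Bool → Bool → Bool → Bool)

theorem continuous_mfSum : Continuous (mfSum f) :=
  continuous_finsetSum _ fun _ _ => by split_ifs <;> fun_prop

theorem mfSum_eq (a : ℝ) :
    mfSum f a = sum1 f * (a * (1 - a) ^ 2)
      + (((f true true false).toNat + (f true false true).toNat + (f false true true).toNat : ℕ)
          * (a ^ 2 * (1 - a)) + (f true true true).toNat * a ^ 3
          + (f false false false).toNat * (1 - a) ^ 3) := by
  have ite_eq (b : Bool) (x : ℝ) : (if b = true then x else 0) = b.toNat * x := by
    cases b <;> simp
  simp only [mfSum, Fintype.sum_prod_type, Fintype.sum_bool, ite_eq]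
  simp [bitR, sum1]
  ring

theorem sum1_mul_le_mfSum {a : ℝ} (ha : a ∈ Icc (0 : ℝ) 1) :
    sum1 f * (a * (1 - a) ^ 2) ≤ mfSum f a := by
  rw [mfSum_eq]
  refine le_add_of_nonneg_right ?_
  have := ha.1
  have hb : 0 ≤ 1 - a := sub_nonneg.mpr ha.2
  generalize 1 - a = b at hb ⊢
  positivity

theorem mfSum_one_le_one : mfSum f 1 ≤ 1 := by
  simpa [mfSum_eq] using Bool.toNat_le (f true true true)

end MeanField

/-- Since `(1 - t)² > 1 - 2t`, the choice `2t = 1 - 1/s` gives `s(1 - t)² > 1`. -/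
theorem exists_mem_Ioo_one_lt_mul_one_sub_sq {s : ℝ} (hs : 1 < s) :
    ∃ t ∈ Ioo (0 : ℝ) 1, 1 < s * (1 - t) ^ 2 := by
  have hs0 : 0 < s := by linarith
  refine ⟨(s - 1) / (2 * s), ⟨by positivity, ?_⟩, ?_⟩
  · rw [div_lt_one (by positivity)]
    linarith
  · field_simp
    nlinarith

theorem exists_eq_self_mem_Ioo {g : ℝ → ℝ} (hg : Continuous g) {t : ℝ} (ht : t ∈ Ioo (0 : ℝ) 1)
    (hgt : t < g t) (hg1 : g 1 < 1) : ∃ a ∈ Ioo (0 : ℝ) 1, a = g a := by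
  obtain ⟨a, ha, hga⟩ := intermediate_value_Ioo' ht.2.le (hg.sub continuous_id).continuousOn
    (show (0 : ℝ) ∈ Ioo (g 1 - 1) (g t - t) from ⟨by linarith, by linarith⟩)
  exact ⟨a, ⟨ht.1.trans ha.1, ha.2⟩, (sub_eq_zero.mp hga).symm⟩

theorem stmt12_general (f : Bool → Bool → Bool → Bool)
    (l : ℝ) (hl : l ∈ Set.Ioo (0:ℝ) 1) (h : l * (sum1 f : ℝ) > 1) :
    ∃ a ∈ Set.Ioo (0:ℝ) 1, a = l * mfSum f a := by
  obtain ⟨t, ht, hlt⟩ := exists_mem_Ioo_one_lt_mul_one_sub_sq h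
  refine exists_eq_self_mem_Ioo (continuous_const.mul (continuous_mfSum f)) ht ?_ ?_
  · calc t < l * sum1 f * (1 - t) ^ 2 * t := lt_mul_left ht.1 hlt
      _ = l * (sum1 f * (t * (1 - t) ^ 2)) := by ring
      _ ≤ l * mfSum f t :=
        mul_le_mul_of_nonneg_left (sum1_mul_le_mfSum f (Ioo_subset_Icc_self ht)) hl.1.le
  · calc l * mfSum f 1 ≤ l * 1 := mul_le_mul_of_nonneg_left (mfSum_one_le_one f) hl.1.le
      _ < 1 := by simpa using hl.2

theorem stmt12 (f : Bool → Bool → Bool → Bool) (hf : f false false false = false)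
    (l : ℝ) (hl : l ∈ Set.Ioo (0:ℝ) 1) (h : l * (sum1 f : ℝ) > 1) :
    ∃ a ∈ Set.Ioo (0:ℝ) 1, a = l * mfSum f a :=
  stmt12_general f l hl h
end
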